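/- Let s, w, d be real numbers and let g = (1 − (s/2)·ε𝐢)·(w·1 − 𝐤)·(1 − (d/2)·ε𝐤) be the associated joint dual quaternion. Then g·conj(g) = (w² + 1)·1; in particular g has real norm, i.e. g lies in the Study quadric. -/

import Mathlib

open Quaternion TrivSqZeroExt DualNumber

noncomputable section

/-- The real dual quaternions. -/
abbrev DQR : Type := DualNumber (Quaternion ℝ)

/-- The quaternion unit 𝐢, viewed as a dual quaternion. -/
def qi : DQR := inl (⟨0,1,0,0⟩ : ℍ[ℝ])
/-- The quaternion unit 𝐤, viewed as a dual quaternion. -/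
def qk : DQR := inl (⟨0,0,0,1⟩ : ℍ[ℝ])

/-- A real scalar, viewed as a dual quaternion. -/
def rs (r : ℝ) : DQR := inl (algebraMap ℝ ℍ[ℝ] r)

/-- Quaternion conjugation of a dual quaternion, applied to both
the primal and dual part. -/
def dconj (q : DQR) : DQR := inl (star (fst q)) + inr (star (snd q))

/-!
Quaternion conjugation `dconj` is an anti-automorphism of the dual quaternions fixing the real
scalars and `ε`. Since real scalars are central, `x y · conj (x y) = x (y · conj y) conj x`, so
the norm `q · conj q` is multiplicative as soon as one factor has real norm. The translation
factors `1 - t ε u` with `u` pure are conjugated to `1 + t ε u` and have norm `1`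
because `ε² = 0`; the rotation factor `w - 𝐤` has norm `w² - 𝐤² = w² + 1`.
-/

lemma dconj_inl (p : ℍ[ℝ]) : dconj (inl p) = inl (star p) := by
  ext <;> simp [dconj]

lemma dconj_mul (p q : DQR) : dconj (p * q) = dconj q * dconj p := by
  ext <;> simp [dconj, add_comm]

lemma dconj_one : dconj 1 = 1 := by
  ext <;> simp [dconj]

lemma dconj_sub (p q : DQR) : dconj (p - q) = dconj p - dconj q := by
  ext <;> simp [dconj]

lemma dconj_eps : dconj ε = ε := by
  ext <;> simp [dconj]

lemma rs_eq_algebraMap (r : ℝ) : rs r = algebraMap ℝ DQR r :=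
  (algebraMap_eq_inl' ℝ ℍ[ℝ] ℍ[ℝ] r).symm

lemma dconj_rs (r : ℝ) : dconj (rs r) = rs r := by
  rw [rs, dconj_inl, Quaternion.algebraMap_def, Quaternion.star_coe]

lemma commute_rs (r : ℝ) (x : DQR) : Commute (rs r) x := by
  rw [rs_eq_algebraMap]
  exact Algebra.commutes r x

lemma dconj_inl_of_re_eq_zero {p : ℍ[ℝ]} (hp : p.re = 0) : dconj (inl p) = -inl p := by
  rw [dconj_inl, Quaternion.star_eq_neg.mpr hp, inl_neg]

lemma inl_mul_self_of_re_eq_zero_of_normSq_eq_one {p : ℍ[ℝ]} (hp : p.re = 0)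
    (hnorm : normSq p = 1) :
    (inl p : DQR) * inl p = -1 := by
  rw [inl_mul_inl, ← sq, Quaternion.sq_eq_neg_normSq.mpr hp, hnorm, Quaternion.coe_one, inl_neg,
    inl_one]

lemma dconj_qi : dconj qi = -qi := dconj_inl_of_re_eq_zero rfl

lemma dconj_qk : dconj qk = -qk := dconj_inl_of_re_eq_zero rfl

lemma qk_mul_qk : qk * qk = -1 :=
  inl_mul_self_of_re_eq_zero_of_normSq_eq_one rfl ((Quaternion.normSq_def' _).trans (by norm_num))

lemma mul_mul_dconj_mul {x y : DQR} {r : ℝ} (hy : y * dconj y = rs r) :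
    x * y * dconj (x * y) = rs r * (x * dconj x) := by
  rw [dconj_mul, mul_assoc, ← mul_assoc y, hy, ← mul_assoc, ← (commute_rs r x).eq, mul_assoc]

lemma one_sub_eps_mul_mul_one_add_eps_mul {R : Type*} [Ring R] (y : R[ε]) :
    (1 - ε * y) * (1 + ε * y) = 1 := by
  have hsq : ε * y * (ε * y) = 0 := by
    rw [mul_assoc, ← mul_assoc y, ← (commute_eps_left y).eq, ← mul_assoc, ← mul_assoc,
      eps_mul_eps, zero_mul, zero_mul]
  rw [sub_mul, one_mul, mul_add, mul_one, hsq]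
  abel

lemma translation_mul_dconj (t : ℝ) {u : DQR} (hu : dconj u = -u) :
    (1 - rs t * ε * u) * dconj (1 - rs t * ε * u) = rs 1 := by
  have hX : rs t * ε * u = ε * (rs t * u) := by
    rw [(commute_rs t ε).eq, mul_assoc]
  have hdX : dconj (ε * (rs t * u)) = -(ε * (rs t * u)) := by
    rw [dconj_mul, dconj_mul, hu, dconj_rs, dconj_eps, neg_mul, neg_mul, ← (commute_rs t u).eq,
      (commute_eps_left _).eq]
  rw [hX, dconj_sub, dconj_one, hdX, sub_neg_eq_add, one_sub_eps_mul_mul_one_add_eps_mul,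
    rs_eq_algebraMap, map_one]

lemma rotation_mul_dconj (w : ℝ) {u : DQR} (hu : dconj u = -u) (huu : u * u = -1) :
    (rs w - u) * dconj (rs w - u) = rs (w ^ 2 + 1) := by
  rw [dconj_sub, dconj_rs, hu, sub_neg_eq_add, ← (commute_rs w u).mul_self_sub_mul_self_eq',
    huu]
  simp only [rs_eq_algebraMap, map_add, map_mul, map_one, sq, sub_neg_eq_add]

/-- The joint dual quaternion `g = (1 - (s/2)ε𝐢)(w - 𝐤)(1 - (d/2)ε𝐤)` satisfies
`g * conj g = (w² + 1) · 1`; in particular it lies in the Study quadric. -/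
theorem joint_has_real_norm (s w d : ℝ) :
    ((1 - rs (s/2) * ε * qi) * (rs w - qk) * (1 - rs (d/2) * ε * qk)) *
        dconj ((1 - rs (s/2) * ε * qi) * (rs w - qk) * (1 - rs (d/2) * ε * qk)) =
      rs (w^2 + 1) := by
  rw [mul_mul_dconj_mul (translation_mul_dconj _ dconj_qk),
    mul_mul_dconj_mul (rotation_mul_dconj w dconj_qk qk_mul_qk),
    translation_mul_dconj _ dconj_qi]
  simp only [rs_eq_algebraMap, ← map_mul, one_mul, mul_one]
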